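/- arXiv:2310.16382 — 6 statements merged into one kernel-verified Lean document; each statement's English description precedes it below -/
import Mathlib

section
/- If H is a connected spanning-or-induced connected subgraph of a connected graph G, then for every natural number x ≥ 1, P(G,x) ≤ P(H,x)·(x-1)^{|V(G)|-|V(H)|}. -/
/-!
Fix a vertex `r` of `H` and send every vertex `v` outside `H` to a neighbour `p v` strictly closer
to `r`. A proper colouring `c` of `G` is then determined by its restriction to `H` together with,
for each `v ∉ H`, the colour `c v` read as one of the `x - 1` colours different from `c (p v)`:
recover `c` outwards from `H` by induction on the distance to `r`.
-/

noncomputable def properColorings {V : Type*} (G : SimpleGraph V) (x : ℕ) : ℕ :=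
  Nat.card {c : V → Fin x // ∀ ⦃a b⦄, G.Adj a b → c a ≠ c b}

theorem eq_of_eqOn_of_rank_lt {α β : Type*} {S : Set α} {c c' : α → β} (p : α → α)
    (rank : α → ℕ) (hrank : ∀ v ∉ S, rank (p v) < rank v) (hS : S.EqOn c c')
    (hstep : ∀ v ∉ S, c (p v) = c' (p v) → c v = c' v) : c = c' := by
  funext v
  induction h : rank v using Nat.strong_induction_on generalizing v with
  | _ n ih =>
    by_cases hv : v ∈ S
    · exact hS hv
    · exact hstep v hv (ih _ (h ▸ hrank v hv) _ rfl)

noncomputable def finNeEquiv {x : ℕ} (b : Fin x) : {a // a ≠ b} ≃ Fin (x - 1) :=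
  Fintype.equivFinOfCardEq (by simp)

theorem eq_of_finNeEquiv_eq {x : ℕ} {a a' b b' : Fin x} (ha : a ≠ b) (ha' : a' ≠ b')
    (hb : b = b') (h : finNeEquiv b ⟨a, ha⟩ = finNeEquiv b' ⟨a', ha'⟩) : a = a' := by
  subst hb
  exact congrArg Subtype.val ((finNeEquiv b).injective h)

theorem SimpleGraph.Connected.exists_adj_dist_lt {V : Type*} {G : SimpleGraph V}
    (hG : G.Connected) {u v : V} (h : v ≠ u) : ∃ w, G.Adj v w ∧ G.dist w u < G.dist v u := by
  obtain ⟨p, hp⟩ := hG.exists_walk_length_eq_dist v u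
  cases p with
  | nil => exact absurd rfl h
  | cons hadj q =>
    refine ⟨_, hadj, ?_⟩
    rw [← hp, SimpleGraph.Walk.length_cons]
    exact Nat.lt_succ_of_le (SimpleGraph.dist_le q)

theorem properColorings_le_mul_pow_of_rank_lt {V : Type*} [Fintype V] {G : SimpleGraph V}
    (H : G.Subgraph) (x : ℕ) (p : V → V) (rank : V → ℕ)
    (hadj : ∀ v ∉ H.verts, G.Adj v (p v)) (hrank : ∀ v ∉ H.verts, rank (p v) < rank v) :
    properColorings G x ≤
      properColorings H.coe x * (x - 1) ^ (Nat.card V - Nat.card H.verts) := by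
  let restrict (c : {c : V → Fin x // ∀ ⦃a b⦄, G.Adj a b → c a ≠ c b}) :
      {c : H.verts → Fin x // ∀ ⦃a b⦄, H.coe.Adj a b → c a ≠ c b} :=
    ⟨fun v ↦ c.1 v, fun _ _ hab ↦ c.2 (H.adj_sub hab)⟩
  let relColor (c : {c : V → Fin x // ∀ ⦃a b⦄, G.Adj a b → c a ≠ c b})
      (v : {v // v ∉ H.verts}) : Fin (x - 1) :=
    finNeEquiv (c.1 (p v)) ⟨c.1 v, c.2 (hadj v v.2)⟩
  have hinj : Function.Injective fun c ↦ (restrict c, relColor c) := by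
    intro c c' h
    simp only [Prod.mk.injEq] at h
    refine Subtype.ext (eq_of_eqOn_of_rank_lt p rank hrank (fun v hv ↦ ?_) fun v hv hpv ↦ ?_)
    · exact congrFun (congrArg Subtype.val h.1) ⟨v, hv⟩
    · exact eq_of_finNeEquiv_eq _ _ hpv (congrFun h.2 ⟨v, hv⟩)
  calc properColorings G x
      ≤ Nat.card ({c : H.verts → Fin x // ∀ ⦃a b⦄, H.coe.Adj a b → c a ≠ c b} ×
          ({v // v ∉ H.verts} → Fin (x - 1))) := Nat.card_le_card_of_injective _ hinj
    _ = properColorings H.coe x * (x - 1) ^ (Nat.card V - Nat.card H.verts) := by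
      classical
      simp [properColorings, Nat.card_eq_fintype_card, Fintype.card_subtype_compl]

theorem stmt_5_general {V : Type*} [Fintype V] (G : SimpleGraph V) (H : G.Subgraph) (x : ℕ)
    (hG : G.Connected) (hH : H.coe.Connected) :
    properColorings G x ≤
      properColorings H.coe x * (x - 1) ^ (Nat.card V - Nat.card H.verts) := by
  obtain ⟨⟨r, hr⟩⟩ := hH.nonempty
  have hparent : ∀ v ∉ H.verts, ∃ w, G.Adj v w ∧ G.dist w r < G.dist v r :=
    fun v hv ↦ hG.exists_adj_dist_lt fun hvr ↦ hv (hvr ▸ hr)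
  choose! p hadj hdist using hparent
  exact properColorings_le_mul_pow_of_rank_lt H x p (G.dist · r) hadj hdist

/-- If `H` is a connected subgraph of a connected graph `G`, then for every `x ≥ 1`,
`P(G,x) ≤ P(H,x)·(x-1)^{|V(G)|-|V(H)|}`. -/
theorem stmt_5 {V : Type*} [Fintype V] (G : SimpleGraph V) (H : G.Subgraph) (x : ℕ)
    (hx : 1 ≤ x) (hG : G.Connected) (hH : H.coe.Connected) :
    properColorings G x ≤
      properColorings H.coe x * (x - 1) ^ (Nat.card V - Nat.card H.verts) :=
  stmt_5_general G H x hG hH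
end

section
/- If G and H are graphs whose intersection is a complete graph K_r, then for every natural number x, P(G ∪ H, x)·P(K_r, x) = P(G, x)·P(H, x). -/
open Function SimpleGraph

theorem Nat.card_eq_sum_card_preimage {Y Z : Type*} [Fintype Y] [Finite Z] (g : Z → Y) :
    Nat.card Z = ∑ y, Nat.card (g ⁻¹' {y}) := by
  rw [Nat.card_congr (Equiv.sigmaFiberEquiv g).symm, Nat.card_sigma]
  rfl

namespace Function.Pullback

variable {X Y Z : Type*} (f : X → Y) (g : Z → Y)

theorem card_eq_sum_card_preimage [Fintype X] [Finite Z] :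
    Nat.card (f.Pullback g) = ∑ x, Nat.card (g ⁻¹' {f x}) := by
  rw [Nat.card_congr (Equiv.subtypeProdEquivSigmaSubtype fun x z => f x = g z), Nat.card_sigma]
  exact Finset.sum_congr rfl fun x _ => Nat.card_congr (Equiv.subtypeEquivRight fun _ => eq_comm)

theorem card_mul_card_eq_card_mul_card [Finite X] [Finite Y] [Finite Z]
    (hg : ∀ y y', Nat.card (g ⁻¹' {y}) = Nat.card (g ⁻¹' {y'})) :
    Nat.card (f.Pullback g) * Nat.card Y = Nat.card X * Nat.card Z := by
  cases nonempty_fintype X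
  cases nonempty_fintype Y
  rcases isEmpty_or_nonempty Y with hY | ⟨⟨y₀⟩⟩
  · have : IsEmpty X := f.isEmpty
    simp
  rw [card_eq_sum_card_preimage, Nat.card_eq_sum_card_preimage g]
  simp only [hg _ y₀, Finset.sum_const, Finset.card_univ, smul_eq_mul, Nat.card_eq_fintype_card]
  ring

end Function.Pullback

theorem Function.Embedding.exists_perm_comp_eq {α β : Type*} [Finite β] (f g : α ↪ β) :
    ∃ σ : Equiv.Perm β, ∀ a, σ (f a) = g a := by
  classical
  let e : Set.range f ≃ Set.range g := (Equiv.ofInjective f f.injective).symm.trans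
    (Equiv.ofInjective g g.injective)
  refine ⟨e.extendSubtype, fun a => ?_⟩
  rw [Equiv.extendSubtype_apply_of_mem e (f a) ⟨a, rfl⟩]
  simp [e, Equiv.ofInjective_symm_apply]

namespace SimpleGraph

variable {V W α β : Type*} {G : SimpleGraph V} {H : SimpleGraph W}

theorem properColorings_eq_card_coloring (G : SimpleGraph V) (x : ℕ) :
    properColorings G x = Nat.card (G.Coloring (Fin x)) :=
  Nat.card_congr
    { toFun := fun c => Coloring.mk c.1 fun h => c.2 h
      invFun := fun C => ⟨C, fun _ _ => C.valid⟩ }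

def coloringEquivEmbeddingOfPairwiseAdj (hH : Pairwise H.Adj) : H.Coloring α ≃ (W ↪ α) where
  toFun C := ⟨C, C.injective_comp_of_pairwise_adj id hH⟩
  invFun f := Coloring.mk f fun h => f.injective.ne h.ne

theorem card_coloring_of_pairwise_adj [Finite W] [Finite α] (hH : Pairwise H.Adj) :
    Nat.card (H.Coloring α) = (Nat.card α).descFactorial (Nat.card W) := by
  cases nonempty_fintype W
  cases nonempty_fintype α
  rw [Nat.card_congr (coloringEquivEmbeddingOfPairwiseAdj hH), Nat.card_eq_fintype_card,
    Fintype.card_embedding_eq, Nat.card_eq_fintype_card, Nat.card_eq_fintype_card]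

theorem Coloring.card_preimage_comp_recolorOfEquiv (φ : H →g G) (σ : α ≃ β)
    (f : H.Coloring α) :
    Nat.card ((·.comp φ) ⁻¹' {H.recolorOfEquiv σ f} : Set (G.Coloring β)) =
      Nat.card ((·.comp φ) ⁻¹' {f} : Set (G.Coloring α)) :=
  Nat.card_congr <| .symm <| (G.recolorOfEquiv σ).subtypeEquiv fun C =>
    ((H.recolorOfEquiv σ).injective.eq_iff (a := C.comp φ)).symm

theorem Coloring.card_preimage_comp_eq_of_pairwise_adj [Finite α] (hH : Pairwise H.Adj)
    (φ : H →g G) (f g : H.Coloring α) :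
    Nat.card ((·.comp φ) ⁻¹' {f} : Set (G.Coloring α)) =
      Nat.card ((·.comp φ) ⁻¹' {g} : Set (G.Coloring α)) := by
  let e := coloringEquivEmbeddingOfPairwiseAdj (α := α) hH
  obtain ⟨σ, hσ⟩ := (e f).exists_perm_comp_eq (e g)
  obtain rfl : H.recolorOfEquiv σ f = g := RelHom.ext hσ
  exact (card_preimage_comp_recolorOfEquiv φ σ f).symm

end SimpleGraph

namespace SimpleGraph.Subgraph

variable {V : Type*} {K : SimpleGraph V} {A B : K.Subgraph} {α : Type*}

theorem mem_verts_or_mem_verts_of_sup_eq_top (hAB : A ⊔ B = ⊤) (v : V) :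
    v ∈ A.verts ∨ v ∈ B.verts := by
  simp [← Set.mem_union, ← verts_sup, hAB]

theorem adj_or_adj_of_sup_eq_top (hAB : A ⊔ B = ⊤) {a b : V} (h : K.Adj a b) :
    A.Adj a b ∨ B.Adj a b := by
  rwa [← sup_adj, hAB, top_adj]

variable (A B α) in
abbrev ColoringsAgreeingOnInf : Type _ :=
  Pullback (fun C : A.coe.Coloring α => C.comp (inclusion inf_le_left))
    (fun C : B.coe.Coloring α => C.comp (inclusion (inf_le_right : A ⊓ B ≤ B)))

open Classical in
noncomputable def ColoringsAgreeingOnInf.glue (hAB : A ⊔ B = ⊤)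
    (p : ColoringsAgreeingOnInf A B α) (v : V) : α :=
  if hv : v ∈ A.verts then p.fst ⟨v, hv⟩
  else p.snd ⟨v, (mem_verts_or_mem_verts_of_sup_eq_top hAB v).resolve_left hv⟩

namespace ColoringsAgreeingOnInf

variable (hAB : A ⊔ B = ⊤) (p : ColoringsAgreeingOnInf A B α)

theorem glue_of_mem_left {v : V} (hv : v ∈ A.verts) : p.glue hAB v = p.fst ⟨v, hv⟩ :=
  dif_pos hv

theorem glue_of_mem_right {v : V} (hv : v ∈ B.verts) : p.glue hAB v = p.snd ⟨v, hv⟩ := by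
  by_cases hvA : v ∈ A.verts
  · rw [glue_of_mem_left hAB p hvA]
    exact DFunLike.congr_fun p.2 ⟨v, hvA, hv⟩
  · exact dif_neg hvA

end ColoringsAgreeingOnInf

noncomputable def coloringEquivColoringsAgreeingOnInf (hAB : A ⊔ B = ⊤) :
    K.Coloring α ≃ ColoringsAgreeingOnInf A B α where
  toFun C := ⟨(C.comp A.hom, C.comp B.hom), rfl⟩
  invFun p := Coloring.mk (p.glue hAB) fun {a b} h => by
    rcases adj_or_adj_of_sup_eq_top hAB h with h | h
    · rw [p.glue_of_mem_left hAB h.fst_mem, p.glue_of_mem_left hAB h.snd_mem]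
      exact p.fst.valid (show A.coe.Adj ⟨a, h.fst_mem⟩ ⟨b, h.snd_mem⟩ from h)
    · rw [p.glue_of_mem_right hAB h.fst_mem, p.glue_of_mem_right hAB h.snd_mem]
      exact p.snd.valid (show B.coe.Adj ⟨a, h.fst_mem⟩ ⟨b, h.snd_mem⟩ from h)
  left_inv C := RelHom.ext fun v => (mem_verts_or_mem_verts_of_sup_eq_top hAB v).elim
    (ColoringsAgreeingOnInf.glue_of_mem_left hAB _) (ColoringsAgreeingOnInf.glue_of_mem_right hAB _)
  right_inv p := Subtype.ext <| Prod.ext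
    (RelHom.ext fun v => p.glue_of_mem_left hAB v.2)
    (RelHom.ext fun v => p.glue_of_mem_right hAB v.2)

end SimpleGraph.Subgraph

/-- If a graph is the union of two subgraphs `A` and `B` whose intersection is a complete
graph `K_r`, then `P(A ∪ B, x)·P(K_r, x) = P(A, x)·P(B, x)`, where
`P(K_r, x) = x(x-1)⋯(x-r+1)`. -/
theorem stmt_6 {V : Type*} [Fintype V] (K : SimpleGraph V) (A B : K.Subgraph) (r x : ℕ)
    (hunion : A ⊔ B = ⊤)
    (hcard : Nat.card (A ⊓ B).verts = r)
    (hcomplete : ∀ a b : (A ⊓ B).verts, a ≠ b → (A ⊓ B).coe.Adj a b) :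
    properColorings K x * x.descFactorial r =
      properColorings A.coe x * properColorings B.coe x := by
  have hclique : Pairwise (A ⊓ B).coe.Adj := fun a b => hcomplete a b
  have hKr : Nat.card ((A ⊓ B).coe.Coloring (Fin x)) = x.descFactorial r := by
    rw [card_coloring_of_pairwise_adj hclique, Nat.card_fin, hcard]
  simp only [properColorings_eq_card_coloring]
  rw [← hKr, Nat.card_congr (Subgraph.coloringEquivColoringsAgreeingOnInf hunion)]
  exact Pullback.card_mul_card_eq_card_mul_card _ _
    (Coloring.card_preimage_comp_eq_of_pairwise_adj hclique _)
end

section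
/- Let G_{n,k} be the graph obtained from the complete graph K_k by attaching an ear (path) with n-k internal vertices between two distinct vertices of the clique. Then P(G_{n,k}, x) = (x-1)_{k-1}·((x-1)^{n-k+1} + (-1)^{n-k}) for all natural numbers x, where (y)_j is the falling factorial. -/
/-- The graph `G_{n,k}` on `n` vertices: a `k`-clique (vertices `0, …, k-1`) together
with an ear with `n - k` internal vertices `k, …, n-1` joining the clique vertices
`0` and `1`. -/
def Gnk (n k : ℕ) : SimpleGraph (Fin n) :=
  SimpleGraph.fromRel (fun a b =>
    ((a : ℕ) < k ∧ (b : ℕ) < k) ∨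
    (k ≤ (a : ℕ) ∧ (b : ℕ) = (a : ℕ) + 1) ∨
    ((a : ℕ) = 0 ∧ (b : ℕ) = k) ∨
    ((a : ℕ) = n - 1 ∧ (b : ℕ) = 1))

/-!
A proper colouring of `G_{n,k}` is an injective colouring of the clique, of which there are
`x.descFactorial k = x · (x-1)_{k-1}`, together with a proper colouring of the ear whose ends carry
the distinct colours of the clique vertices `0` and `1`. Let `N_m(a, b)` count the proper
colourings of the `m` internal vertices of a path with end colours `a`, `b`. Choosing the colour
`c ≠ a` of the first internal vertex gives `N_{m+1}(a, b) = ∑_{c ≠ a} N_m(c, b)`, whence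
`N_m(a, b) = W_m + [a = b] (-1)^{m+1}` with `x W_m = (x-1)^{m+1} - (-1)^{m+1}`.
-/

open Finset Function

section ProperPath

variable {α : Type*}

/-- `Fin.cons a h i` and `Fin.snoc h b i` are the `i`-th and `(i+1)`-st terms of the sequence
`a, h 0, …, h (m-1), b`. -/
def IsProperPath {m : ℕ} (a b : α) (h : Fin m → α) : Prop :=
  ∀ i : Fin (m + 1), (Fin.cons a h : Fin (m + 1) → α) i ≠ (Fin.snoc h b : Fin (m + 1) → α) i

theorem isProperPath_zero (a b : α) (h : Fin 0 → α) : IsProperPath a b h ↔ a ≠ b := by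
  simp [IsProperPath, Fin.forall_fin_one, Fin.snoc]

theorem isProperPath_cons {m : ℕ} (a b c : α) (h : Fin m → α) :
    IsProperPath a b (Fin.cons c h) ↔ a ≠ c ∧ IsProperPath c b h := by
  simp only [IsProperPath, Fin.forall_fin_succ, ← Fin.cons_snoc_eq_snoc_cons, Fin.cons_zero,
    Fin.cons_succ]

variable [Fintype α] [DecidableEq α]

theorem card_isProperPath_succ (m : ℕ) (a b : α) :
    Nat.card {h : Fin (m + 1) → α // IsProperPath a b h} =
      ∑ c ∈ univ.erase a, Nat.card {h : Fin m → α // IsProperPath c b h} := by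
  have e : {h : Fin (m + 1) → α // IsProperPath a b h} ≃
      Σ c : α, {h : Fin m → α // a ≠ c ∧ IsProperPath c b h} :=
    (Equiv.subtypeEquiv (Fin.consEquiv fun _ => α)
      (fun p => (isProperPath_cons a b p.1 p.2).symm)).symm.trans
      (Equiv.subtypeProdEquivSigmaSubtype fun c h => a ≠ c ∧ IsProperPath c b h)
  rw [Nat.card_congr e, Nat.card_sigma, ← add_sum_erase _ _ (mem_univ a)]
  refine (add_eq_right.2 (@Nat.card_of_isEmpty _ ⟨fun h => h.2.1 rfl⟩)).trans
    (sum_congr rfl fun c hc => Nat.card_congr (Equiv.subtypeEquivRight fun h => ?_))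
  exact and_iff_right (ne_of_mem_erase hc).symm

/-- With `q` colours, the number of proper colourings of a path with `m` internal vertices whose
two end colours are prescribed and distinct. -/
def properPathCount (q : ℤ) : ℕ → ℤ
  | 0 => 1
  | m + 1 => (q - 1) * properPathCount q m + (-1) ^ (m + 1)

theorem mul_properPathCount (q : ℤ) (m : ℕ) :
    q * properPathCount q m = (q - 1) ^ (m + 1) - (-1) ^ (m + 1) := by
  induction m with
  | zero => simp [properPathCount]
  | succ m ih => rw [properPathCount]; linear_combination (q - 1) * ih

theorem card_isProperPath (m : ℕ) (a b : α) :
    (Nat.card {h : Fin m → α // IsProperPath a b h} : ℤ) =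
      properPathCount (Fintype.card α) m + if a = b then (-1) ^ (m + 1) else 0 := by
  induction m generalizing a with
  | zero =>
    rw [Nat.card_congr (Equiv.subtypeEquivRight (isProperPath_zero a b))]
    by_cases hab : a = b <;> simp [hab, properPathCount]
  | succ m ih =>
    rw [card_isProperPath_succ, Nat.cast_sum, sum_congr rfl fun c _ => ih c, sum_add_distrib,
      sum_const, card_erase_of_mem (mem_univ a), card_univ, sum_ite_eq', properPathCount]
    have hcard : ((Fintype.card α - 1 : ℕ) : ℤ) = Fintype.card α - 1 :=
      Nat.cast_pred (Fintype.card_pos_iff.2 ⟨a⟩)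
    by_cases hab : a = b
    · simp only [hab, hcard, mem_erase, ne_eq, not_true_eq_false, false_and, if_true, if_false,
        nsmul_eq_mul]
      ring
    · simp only [hab, Ne.symm hab, hcard, mem_erase, mem_univ, ne_eq, not_false_eq_true, and_true,
        if_true, if_false, nsmul_eq_mul]
      ring

end ProperPath

section Ear

variable {k : ℕ} (hk : 1 < k) (m : ℕ)

/-- In `Gnk (k + m) k` the ear is the path `0, k, k+1, …, k+m-1, 1`; its `i`-th edge joins
`earTail hk m i` to `earHead hk m i`. -/
def earTail : Fin (m + 1) → Fin (k + m) := Fin.cons (Fin.castAdd m ⟨0, by omega⟩) (Fin.natAdd k)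

def earHead : Fin (m + 1) → Fin (k + m) := Fin.snoc (Fin.natAdd k) (Fin.castAdd m ⟨1, hk⟩)

variable {m}

theorem earTail_val (i : Fin (m + 1)) :
    (earTail hk m i : ℕ) = if (i : ℕ) = 0 then 0 else k + i - 1 := by
  induction i using Fin.cases <;> simp [earTail]

theorem earHead_val (i : Fin (m + 1)) :
    (earHead hk m i : ℕ) = if (i : ℕ) = m then 1 else k + i := by
  induction i using Fin.lastCases with
  | last => simp [earHead]
  | cast i => simp [earHead]; omega

theorem gnk_adj_iff {u v : Fin (k + m)} :
    (Gnk (k + m) k).Adj u v ↔ ((u : ℕ) < k ∧ (v : ℕ) < k ∧ u ≠ v) ∨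
      ∃ i, s(u, v) = s(earTail hk m i, earHead hk m i) := by
  simp only [Gnk, SimpleGraph.fromRel_adj, Sym2.eq_iff, Fin.ext_iff, earTail_val, earHead_val]
  constructor
  -- an ear edge leaving `u` is the `0`-th one if `u = 0` and the `(u - k + 1)`-st one otherwise
  · rintro ⟨huv, h | h⟩ <;> by_cases hcl : (u : ℕ) < k ∧ (v : ℕ) < k
    · exact Or.inl ⟨hcl.1, hcl.2, huv⟩
    · refine Or.inr ⟨⟨if (u : ℕ) = 0 then 0 else u - k + 1, by split_ifs <;> omega⟩, Or.inl ?_⟩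
      simp only
      split_ifs <;> first | contradiction | omega
    · exact Or.inl ⟨hcl.1, hcl.2, huv⟩
    · refine Or.inr ⟨⟨if (v : ℕ) = 0 then 0 else v - k + 1, by split_ifs <;> omega⟩, Or.inr ?_⟩
      simp only
      split_ifs <;> first | contradiction | omega
  · rintro (⟨hu, hv, huv⟩ | ⟨i, ⟨hu, hv⟩ | ⟨hu, hv⟩⟩)
    · omega
    all_goals split_ifs at hu hv <;> omega

theorem gnk_append_proper_iff {α : Type*} (f : Fin k → α) (h : Fin m → α) :
    (∀ ⦃u v⦄, (Gnk (k + m) k).Adj u v → Fin.append f h u ≠ Fin.append f h v) ↔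
      Injective f ∧ IsProperPath (f ⟨0, by omega⟩) (f ⟨1, hk⟩) h := by
  set c := Fin.append f h
  have hleft : ∀ i, c (Fin.castAdd m i) = f i := Fin.append_left f h
  have hpath : IsProperPath (f ⟨0, by omega⟩) (f ⟨1, hk⟩) h ↔
      ∀ i, c (earTail hk m i) ≠ c (earHead hk m i) := by
    have hear : c ∘ Fin.natAdd k = h := funext (Fin.append_right f h)
    have htail : c ∘ earTail hk m = Fin.cons (f ⟨0, by omega⟩) h := by
      rw [earTail, Fin.comp_cons, hear, hleft]
    have hhead : c ∘ earHead hk m = Fin.snoc h (f ⟨1, hk⟩) := by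
      rw [earHead, Fin.comp_snoc, hear, hleft]
    simp only [IsProperPath, ← htail, ← hhead, comp_apply]
  simp only [gnk_adj_iff hk, hpath]
  constructor
  · intro hc
    refine ⟨fun i j hij => ?_, fun i => hc (Or.inr ⟨i, rfl⟩)⟩
    by_contra hne
    refine hc (u := Fin.castAdd m i) (v := Fin.castAdd m j)
      (Or.inl ⟨i.2, j.2, fun he => hne (Fin.castAdd_injective _ _ he)⟩) ?_
    rwa [hleft, hleft]
  · rintro ⟨hf, hp⟩ u v (⟨hu, hv, huv⟩ | ⟨i, he⟩)
    · intro he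
      have := hf ((hleft ⟨u, hu⟩).symm.trans (he.trans (hleft ⟨v, hv⟩)))
      exact huv (Fin.ext (Fin.mk.inj_iff.1 this))
    · rcases Sym2.eq_iff.1 he with ⟨rfl, rfl⟩ | ⟨rfl, rfl⟩
      exacts [hp i, (hp i).symm]

end Ear

theorem properColorings_gnk {k : ℕ} (hk : 1 < k) (m x : ℕ) :
    (properColorings (Gnk (k + m) k) x : ℤ) = x.descFactorial k * properPathCount x m := by
  classical
  let P (f : Fin k → Fin x) (h : Fin m → Fin x) : Prop :=
    Injective f ∧ IsProperPath (f ⟨0, by omega⟩) (f ⟨1, hk⟩) h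
  have e : {c : Fin (k + m) → Fin x // ∀ ⦃u v⦄, (Gnk (k + m) k).Adj u v → c u ≠ c v} ≃
      Σ f : Fin k → Fin x, {h : Fin m → Fin x // P f h} :=
    (Equiv.subtypeEquiv (Fin.appendEquiv k m)
      fun p => (gnk_append_proper_iff hk p.1 p.2).symm).symm.trans
      (Equiv.subtypeProdEquivSigmaSubtype P)
  have hfiber (f : Fin k → Fin x) :
      (Nat.card {h // P f h} : ℤ) = if Injective f then properPathCount x m else 0 := by
    by_cases hf : Injective f
    · have hne : f ⟨0, by omega⟩ ≠ f ⟨1, hk⟩ := hf.ne (by simp)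
      rw [if_pos hf, Nat.card_congr (Equiv.subtypeEquivRight fun h => and_iff_right hf),
        card_isProperPath, if_neg hne, add_zero, Fintype.card_fin]
    · rw [if_neg hf, @Nat.card_of_isEmpty _ ⟨fun h => hf h.2.1⟩, Nat.cast_zero]
  have hinj : #{f : Fin k → Fin x | Injective f} = x.descFactorial k := by
    rw [← Fintype.card_subtype, Fintype.card_congr (Equiv.subtypeInjectiveEquivEmbedding _ _),
      Fintype.card_embedding_eq, Fintype.card_fin, Fintype.card_fin]
  rw [properColorings, Nat.card_congr e, Nat.card_sigma, Nat.cast_sum,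
    sum_congr rfl fun f _ => hfiber f, ← sum_filter, sum_const, hinj, nsmul_eq_mul]

theorem descFactorial_succ_eq_mul_eval_descPochhammer (x j : ℕ) :
    (x.descFactorial (j + 1) : ℤ) = x * (descPochhammer ℤ j).eval ((x : ℤ) - 1) := by
  rw [← descPochhammer_eval_eq_descFactorial, descPochhammer_succ_left, Polynomial.eval_mul,
    Polynomial.eval_comp]
  simp

/-- `P(G_{n,k}, x) = (x-1)_{k-1}·((x-1)^{n-k+1} + (-1)^{n-k})` for `n > k ≥ 3`. -/
theorem stmt_10 (n k x : ℕ) (hk : 3 ≤ k) (hn : k < n) :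
    (properColorings (Gnk n k) x : ℤ) =
      (descPochhammer ℤ (k - 1)).eval ((x : ℤ) - 1) *
        (((x : ℤ) - 1) ^ (n - k + 1) + (-1 : ℤ) ^ (n - k)) := by
  obtain ⟨m, rfl⟩ := Nat.exists_eq_add_of_le hn.le
  obtain ⟨j, rfl⟩ := Nat.exists_eq_add_of_le' (show 1 ≤ k by omega)
  rw [properColorings_gnk (by omega), descFactorial_succ_eq_mul_eval_descPochhammer,
    Nat.add_sub_cancel_left, Nat.add_sub_cancel]
  linear_combination (descPochhammer ℤ j).eval ((x : ℤ) - 1) * mul_properPathCount x m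
end

section
/- Let G be a connected k-chromatic graph with independence number 2 that has a clique cut-set S of size at most two. Then the clique number of G equals k. -/
/-!
Since `α(G) ≤ 2`, the complement of the cut `S` splits into two cliques `A`, `B` with no edges
between them. Colourings of `G[A ∪ S]` and `G[B ∪ S]` can be glued along the clique `S`, so it
suffices that each side is `ω`-colourable. Each side has at most two vertices outside a maximum
clique `C`; colouring each of them like a non-neighbour in `C` works unless both have the same
single non-neighbour `c`, and then, having no independent triple, `C - c + x + y` would be a
larger clique.
-/

/-- The independence number of `G` is `m`: `m` is the greatest size of a set of
pairwise non-adjacent vertices. -/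
def IndepNumIs {V : Type*} (G : SimpleGraph V) (m : ℕ) : Prop :=
  IsGreatest {n | ∃ s : Finset V, ((s : Set V).Pairwise fun a b => ¬ G.Adj a b) ∧ s.card = n} m

/-- The clique number of `G` is `m`: `m` is the greatest size of a clique. -/
def CliqueNumIs {V : Type*} (G : SimpleGraph V) (m : ℕ) : Prop :=
  IsGreatest {n | ∃ s : Finset V, G.IsClique (s : Set V) ∧ s.card = n} m

open Finset

namespace SimpleGraph

variable {V : Type*} {G : SimpleGraph V}

theorem IndepSetFree.adj_of_not_adj (h : G.IndepSetFree 3) {a b c : V}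
    (hab : a ≠ b) (hac : a ≠ c) (hbc : b ≠ c) (nab : ¬ G.Adj a b) (nac : ¬ G.Adj a c) :
    G.Adj b c := by
  classical
  by_contra nbc
  exact (cliqueFree_compl G).2 h {a, b, c}
    (is3Clique_triple_iff.2 ⟨⟨hab, nab⟩, ⟨hac, nac⟩, ⟨hbc, nbc⟩⟩)

theorem IndepSetFree.induce {n : ℕ} (h : G.IndepSetFree n) (s : Set V) :
    (G.induce s).IndepSetFree n := fun t ht =>
  h (t.map (Function.Embedding.subtype _))
    ⟨by
      simp only [coe_map, Function.Embedding.subtype_apply]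
      rintro _ ⟨u, hu, rfl⟩ _ ⟨v, hv, rfl⟩ huv
      exact ht.isIndepSet hu hv (Subtype.coe_ne_coe.1 huv),
    by rw [card_map, ht.card_eq]⟩

theorem colorable_card_of_injOn_compl (C : Finset V) (f : V → V)
    (hf : ∀ v ∉ C, f v ∈ C ∧ ¬ G.Adj v (f v)) (hinj : Set.InjOn f (↑C)ᶜ) :
    G.Colorable #C := by
  classical
  let c : V → C := fun v => if hv : v ∈ C then ⟨v, hv⟩ else ⟨f v, (hf v hv).1⟩
  have valid : ∀ {u v}, G.Adj u v → c u ≠ c v := by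
    intro u v huv hc
    replace hc := congrArg Subtype.val hc
    by_cases hu : u ∈ C <;> by_cases hv : v ∈ C <;>
      simp only [c, hu, hv, dite_true, dite_false] at hc
    · exact huv.ne hc
    · exact (hf v hv).2 (hc ▸ huv.symm)
    · exact (hf u hu).2 (hc ▸ huv)
    · exact huv.ne (hinj hu hv hc)
  simpa using (Coloring.mk c valid).colorable

theorem IsMaximumClique.exists_not_adj [Finite V] {C : Finset V} (hC : G.IsMaximumClique C)
    {x : V} (hx : x ∉ C) : ∃ c ∈ C, ¬ G.Adj x c := by
  classical
  by_contra! h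
  have hclique : G.IsClique (insert x C : Finset V) := by
    rw [coe_insert]
    exact hC.isClique.insert fun c hc _ => h c hc
  have := hC.maximum _ hclique
  rw [card_insert_of_notMem hx] at this
  omega

theorem IsMaximumClique.exists_ne_not_adj [Finite V] (h3 : G.IndepSetFree 3) {C : Finset V}
    (hC : G.IsMaximumClique C) {x y : V} (hx : x ∉ C) (hy : y ∉ C) (hxy : x ≠ y) :
    ∃ p ∈ C, ∃ q ∈ C, p ≠ q ∧ ¬ G.Adj x p ∧ ¬ G.Adj y q := by
  classical
  obtain ⟨c, hc, hxc⟩ := hC.exists_not_adj hx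
  by_cases hyC : ∃ d ∈ C, d ≠ c ∧ ¬ G.Adj y d
  · obtain ⟨d, hd, hdc, hyd⟩ := hyC
    exact ⟨c, hc, d, hd, hdc.symm, hxc, hyd⟩
  push Not at hyC
  have hyc : ¬ G.Adj y c := by
    obtain ⟨e, he, hye⟩ := hC.exists_not_adj hy
    by_cases hec : e = c
    · exact hec ▸ hye
    · exact absurd (hyC e he hec) hye
  by_cases hxC : ∃ d ∈ C, d ≠ c ∧ ¬ G.Adj x d
  · obtain ⟨d, hd, hdc, hxd⟩ := hxC
    exact ⟨d, hd, c, hc, hdc, hxd, hyc⟩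
  push Not at hxC
  have hxy_adj : G.Adj x y := h3.adj_of_not_adj (a := c) (fun h => hx (h ▸ hc))
    (fun h => hy (h ▸ hc)) hxy (fun h => hxc h.symm) (fun h => hyc h.symm)
  have hD : G.IsClique (insert x (insert y (C.erase c)) : Finset V) := by
    rw [coe_insert, coe_insert, isClique_insert, isClique_insert]
    refine ⟨⟨hC.isClique.subset (by simp), fun b hb _ => ?_⟩, fun b hb _ => ?_⟩
    · exact hyC b (mem_of_mem_erase hb) (ne_of_mem_erase hb)
    · rcases hb with rfl | hb
      · exact hxy_adj
      · exact hxC b (mem_of_mem_erase hb) (ne_of_mem_erase hb)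
  have := hC.maximum _ hD
  rw [card_insert_of_notMem (by simp [hxy, hx]), card_insert_of_notMem (by simp [hy]),
    card_erase_of_mem hc] at this
  have : 0 < #C := card_pos.2 ⟨c, hc⟩
  omega

theorem colorable_cliqueNum_of_card_le_cliqueNum_add_two [Finite V] (h3 : G.IndepSetFree 3)
    (hcard : Nat.card V ≤ G.cliqueNum + 2) : G.Colorable G.cliqueNum := by
  classical
  have := Fintype.ofFinite V
  obtain ⟨C, hC⟩ := G.maximumClique_exists
  rw [← maximumClique_card_eq_cliqueNum C hC] at hcard ⊢
  have hout : #Cᶜ ≤ 2 := by rw [card_compl, ← Nat.card_eq_fintype_card]; omega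
  rcases (show #Cᶜ ≤ 1 ∨ #Cᶜ = 2 by omega) with h1 | h2
  · have hnonadj : ∀ x, ∃ c, x ∉ C → c ∈ C ∧ ¬ G.Adj x c := fun x => by
      by_cases hx : x ∈ C
      · exact ⟨x, absurd hx⟩
      · obtain ⟨c, hc, hxc⟩ := hC.exists_not_adj hx
        exact ⟨c, fun _ => ⟨hc, hxc⟩⟩
    choose g hg using hnonadj
    refine colorable_card_of_injOn_compl C g hg (Set.Subsingleton.injOn ?_ g)
    rw [← coe_compl]
    exact fun a ha b hb => card_le_one.1 h1 a ha b hb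
  obtain ⟨x, y, hxy, hxyC⟩ := card_eq_two.1 h2
  have hcompl : ∀ v ∉ C, v = x ∨ v = y := fun v hv => by simpa [hxyC] using mem_compl.2 hv
  obtain ⟨p, hp, q, hq, hpq, hxp, hyq⟩ := hC.exists_ne_not_adj h3
    (mem_compl.1 (by simp [hxyC])) (mem_compl.1 (by simp [hxyC])) hxy
  refine colorable_card_of_injOn_compl C (fun v => if v = x then p else q) ?_ ?_
  · intro v hv
    rcases hcompl v hv with rfl | rfl <;> simp [*, hxy.symm]
  · intro u hu v hv huv
    rcases hcompl u hu with rfl | rfl <;> rcases hcompl v hv with rfl | rfl <;>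
      simp_all [hxy.symm]

/-- Both colourings are injective on the clique `X ∩ Y`, so after permuting the colours of the
second one they agree there and can be merged. -/
theorem Colorable.of_induce_of_isClique_inter {X Y : Set V} {n : ℕ} (hcover : X ∪ Y = Set.univ)
    (hXY : G.IsClique (X ∩ Y)) (hsep : ∀ x ∉ Y, ∀ y ∉ X, ¬ G.Adj x y)
    (hX : (G.induce X).Colorable n) (hY : (G.induce Y).Colorable n) : G.Colorable n := by
  classical
  obtain ⟨c₁⟩ := hX
  obtain ⟨c₂⟩ := hY
  have hcov : ∀ v, v ∈ X ∨ v ∈ Y := fun v => Set.eq_univ_iff_forall.1 hcover v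
  let f₁ : ↥(X ∩ Y) → Fin n := fun v => c₁ ⟨v, v.2.1⟩
  let f₂ : ↥(X ∩ Y) → Fin n := fun v => c₂ ⟨v, v.2.2⟩
  have hf₁ : Function.Injective f₁ := fun u v h => by
    by_contra huv
    exact c₁.valid (show (G.induce X).Adj ⟨u, u.2.1⟩ ⟨v, v.2.1⟩ from
      hXY u.2 v.2 (Subtype.coe_ne_coe.2 huv)) h
  have hf₂ : Function.Injective f₂ := fun u v h => by
    by_contra huv
    exact c₂.valid (show (G.induce Y).Adj ⟨u, u.2.2⟩ ⟨v, v.2.2⟩ from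
      hXY u.2 v.2 (Subtype.coe_ne_coe.2 huv)) h
  have : Finite ↥(X ∩ Y) := Finite.of_injective f₁ hf₁
  obtain ⟨σ, hσ⟩ := Equiv.Perm.exists_extending_pair f₂ f₁ hf₂ hf₁
  let c : V → Fin n := fun v =>
    if h : v ∈ X then c₁ ⟨v, h⟩ else σ (c₂ ⟨v, (hcov v).resolve_left h⟩)
  have hcX : ∀ v (h : v ∈ X), c v = c₁ ⟨v, h⟩ := fun v h => dif_pos h
  have hcY : ∀ v (h : v ∈ Y), c v = σ (c₂ ⟨v, h⟩) := fun v h => by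
    by_cases hv : v ∈ X
    · exact (hcX v hv).trans (hσ ⟨v, hv, h⟩).symm
    · exact dif_neg hv
  refine ⟨Coloring.mk c fun {u v} huv => ?_⟩
  by_cases hXuv : u ∈ X ∧ v ∈ X
  · rw [hcX u hXuv.1, hcX v hXuv.2]
    exact c₁.valid huv
  by_cases hYuv : u ∈ Y ∧ v ∈ Y
  · rw [hcY u hYuv.1, hcY v hYuv.2]
    exact σ.injective.ne (c₂.valid huv)
  exfalso
  rcases hcov u with hu | hu <;> rcases hcov v with hv | hv
  · exact hXuv ⟨hu, hv⟩
  · exact hsep u (fun h => hYuv ⟨h, hv⟩) v (fun h => hXuv ⟨hu, h⟩) huv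
  · exact hsep v (fun h => hYuv ⟨hu, h⟩) u (fun h => hXuv ⟨h, hv⟩) huv.symm
  · exact hYuv ⟨hu, hv⟩

theorem colorable_cliqueNum_induce_union [Fintype V] [DecidableEq V] (h3 : G.IndepSetFree 3)
    {A S : Finset V} (hA : G.IsClique (A : Set V)) (hS : #S ≤ 2) :
    (G.induce ↑(A ∪ S)).Colorable (G.induce ↑(A ∪ S)).cliqueNum := by
  refine colorable_cliqueNum_of_card_le_cliqueNum_add_two (h3.induce _) ?_
  have hA' : (G.induce ↑(A ∪ S)).IsClique ↑(A.subtype (· ∈ A ∪ S)) :=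
    fun u hu v hv huv => hA (by simpa using hu) (by simpa using hv) (Subtype.coe_ne_coe.2 huv)
  have hcardA : #A ≤ (G.induce ↑(A ∪ S)).cliqueNum := by
    have := hA'.card_le_cliqueNum
    rwa [card_subtype, filter_true_of_mem fun _ => mem_union_left S] at this
  calc Nat.card ↑(A ∪ S : Finset V) = #(A ∪ S) := Nat.card_eq_finsetCard _
    _ ≤ #A + #S := card_union_le A S
    _ ≤ _ := by omega

theorem exists_cliques_of_not_connected_induce [Fintype V] (h3 : G.IndepSetFree 3) {s : Set V}
    (hs : ¬ (G.induce s).Connected) :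
    ∃ A B : Finset V, (∀ v ∈ s, v ∈ A ∨ v ∈ B) ∧ Disjoint A B ∧ G.IsClique (A : Set V) ∧
      G.IsClique (B : Set V) ∧ ∀ a ∈ A, ∀ b ∈ B, ¬ G.Adj a b := by
  classical
  rw [connected_iff_exists_forall_reachable] at hs
  push Not at hs
  obtain hempty | hnonempty := isEmpty_or_nonempty s
  · exact ⟨∅, ∅, fun v hv => isEmptyElim (⟨v, hv⟩ : s), by simp, by simp, by simp,
      by simp⟩
  obtain ⟨u⟩ := hnonempty
  obtain ⟨w, huw⟩ := hs u
  let A := univ.filter fun v => ∃ h : v ∈ s, (G.induce s).Reachable u ⟨v, h⟩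
  let B := univ.filter fun v => ∃ h : v ∈ s, ¬ (G.induce s).Reachable u ⟨v, h⟩
  have hsep : ∀ a ∈ A, ∀ b ∈ B, ¬ G.Adj a b := by
    simp only [A, B, mem_filter, mem_univ, true_and]
    rintro a ⟨ha, hua⟩ b ⟨hb, hub⟩ hab
    have hab' : (G.induce s).Adj ⟨a, ha⟩ ⟨b, hb⟩ := hab
    exact hub (hua.trans hab'.reachable)
  have hdisj : Disjoint A B := by
    simp only [A, B, Finset.disjoint_left, mem_filter, mem_univ, true_and]
    rintro v ⟨_, hv⟩ ⟨_, hv'⟩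
    exact hv' hv
  have hne : ∀ a ∈ A, ∀ b ∈ B, a ≠ b := fun a ha b hb h =>
    Finset.disjoint_left.1 hdisj ha (h ▸ hb)
  have huA : ↑u ∈ A := by simp [A]
  have hwB : ↑w ∈ B := by simpa [B] using huw
  refine ⟨A, B, fun v hv => ?_, hdisj, fun a ha a' ha' haa' => ?_, fun b hb b' hb' hbb' => ?_,
    hsep⟩
  · by_cases h : (G.induce s).Reachable u ⟨v, hv⟩
    · exact Or.inl (by simp [A, hv, h])
    · exact Or.inr (by simp [B, hv, h])
  · exact h3.adj_of_not_adj (hne a ha w hwB).symm (hne a' ha' w hwB).symm haa'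
      (fun h => hsep a ha w hwB h.symm) (fun h => hsep a' ha' w hwB h.symm)
  · exact h3.adj_of_not_adj (hne u huA b hb) (hne u huA b' hb') hbb'
      (hsep u huA b hb) (hsep u huA b' hb')

end SimpleGraph

open SimpleGraph

theorem IndepNumIs.indepSetFree {V : Type*} {G : SimpleGraph V} {m : ℕ} (h : IndepNumIs G m) :
    G.IndepSetFree (m + 1) := fun t ht => by
  have := h.2 ⟨t, ht.isIndepSet, ht.card_eq⟩
  omega

theorem cliqueNumIs_of_colorable_cliqueNum {V : Type*} [Finite V] {G : SimpleGraph V} {k : ℕ}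
    (hχ : G.chromaticNumber = k) (h : G.Colorable G.cliqueNum) : CliqueNumIs G k := by
  have hk : G.cliqueNum = k := by
    have h₁ := h.chromaticNumber_le
    have h₂ := G.cliqueNum_le_chromaticNumber
    rw [hχ] at h₁ h₂
    exact_mod_cast le_antisymm h₂ h₁
  subst hk
  obtain ⟨s, hs⟩ := G.exists_isNClique_cliqueNum
  refine ⟨⟨s, hs.isClique, hs.card_eq⟩, ?_⟩
  rintro _ ⟨t, ht, rfl⟩
  exact ht.card_le_cliqueNum

theorem stmt_12_general {V : Type*} [Fintype V] (G : SimpleGraph V) (k : ℕ) (S : Finset V)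
    (hchrom : G.chromaticNumber = (k : ℕ∞))
    (hindep : IndepNumIs G 2)
    (hcard : S.card ≤ 2) (hclique : G.IsClique (S : Set V))
    (hcut : ¬ (G.induce {v | v ∉ S}).Connected) :
    CliqueNumIs G k := by
  classical
  have h3 : G.IndepSetFree 3 := hindep.indepSetFree
  obtain ⟨A, B, hcover, hdisj, hA, hB, hsep⟩ := exists_cliques_of_not_connected_induce h3 hcut
  refine cliqueNumIs_of_colorable_cliqueNum hchrom <|
    Colorable.of_induce_of_isClique_inter (X := ↑(A ∪ S)) (Y := ↑(B ∪ S)) ?_ ?_ ?_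
      ((colorable_cliqueNum_induce_union h3 hA hcard).mono (cliqueNum_induce_le _))
      ((colorable_cliqueNum_induce_union h3 hB hcard).mono (cliqueNum_induce_le _))
  · refine Set.eq_univ_of_forall fun v => ?_
    simp only [coe_union, Set.mem_union, mem_coe]
    by_cases hv : v ∈ S <;> grind
  · refine hclique.subset fun v ⟨hvA, hvB⟩ => ?_
    simp only [coe_union, Set.mem_union, mem_coe] at hvA hvB
    grind [Finset.disjoint_left]
  · intro x hx y hy
    simp only [coe_union, Set.mem_union, mem_coe, not_or] at hx hy
    exact hsep x ((hcover x hx.2).resolve_right hx.1) y ((hcover y hy.2).resolve_left hy.1)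

/-- If `G` is a connected `k`-chromatic graph with independence number `2` that has a
clique cut-set `S` of size at most two, then the clique number of `G` equals `k`. -/
theorem stmt_12 {V : Type*} [Fintype V] (G : SimpleGraph V) (k : ℕ) (S : Finset V)
    (hconn : G.Connected) (hchrom : G.chromaticNumber = (k : ℕ∞))
    (hindep : IndepNumIs G 2)
    (hcard : S.card ≤ 2) (hclique : G.IsClique (S : Set V))
    (hcut : ¬ (G.induce {v | v ∉ S}).Connected) :
    CliqueNumIs G k :=
  stmt_12_general G k S hchrom hindep hcard hclique hcut
end

section
/- Let G be a connected graph with α(G) = 2 and χ(G) = k, and let S be a stable cut-set of size 2 with components G₁, G₂ of G − S. Then every vertex u ∈ S satisfies V(G₁) ⊆ N(u) or V(G₂) ⊆ N(u), and max{χ(G₁), χ(G₂)} ≥ k − 1. -/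
namespace SimpleGraph

variable {V : Type*} {G : SimpleGraph V}

theorem ConnectedComponent.not_adj_of_ne {C₁ C₂ : G.ConnectedComponent} (hne : C₁ ≠ C₂)
    {a b : V} (ha : a ∈ C₁.supp) (hb : b ∈ C₂.supp) : ¬ G.Adj a b :=
  fun hab => hne (eq_of_common_vertex (C₁.mem_supp_of_adj_mem_supp ha hab) hb)

theorem chromaticNumber_le_max_of_forall_eq_or_eq {C₁ C₂ : G.ConnectedComponent}
    (hall : ∀ C : G.ConnectedComponent, C = C₁ ∨ C = C₂) :
    G.chromaticNumber ≤
      max C₁.toSimpleGraph.chromaticNumber C₂.toSimpleGraph.chromaticNumber := by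
  induction h : max C₁.toSimpleGraph.chromaticNumber C₂.toSimpleGraph.chromaticNumber
    using ENat.recTopCoe with
  | top => exact le_top
  | coe n =>
    rw [max_eq_iff] at h
    have h₁ : C₁.toSimpleGraph.Colorable n := chromaticNumber_le_iff_colorable.1 (by aesop)
    have h₂ : C₂.toSimpleGraph.Colorable n := chromaticNumber_le_iff_colorable.1 (by aesop)
    refine (colorable_iff_forall_connectedComponent.2 fun C => ?_).chromaticNumber_le
    rcases hall C with rfl | rfl
    exacts [h₁, h₂]

theorem chromaticNumber_le_induce_compl_add_one {s : Set V} (hs : G.IsIndepSet s) :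
    G.chromaticNumber ≤ (G.induce sᶜ).chromaticNumber + 1 := by
  classical
  induction h : (G.induce sᶜ).chromaticNumber using ENat.recTopCoe with
  | top => simp
  | coe n =>
    obtain ⟨c⟩ := chromaticNumber_le_iff_colorable.1 h.le
    let c' : G.Coloring (Option (Fin n)) := Coloring.mk
      (fun v => if hv : v ∈ s then none else some (c ⟨v, hv⟩)) fun {x y} hxy => by
        by_cases hx : x ∈ s <;> by_cases hy : y ∈ s
        · exact absurd hxy (hs hx hy (G.ne_of_adj hxy))
        all_goals simp only [hx, hy, dite_true, dite_false, ne_eq, reduceCtorEq,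
          not_false_eq_true, Option.some.injEq]
        exact c.valid (v := ⟨x, hx⟩) (w := ⟨y, hy⟩) hxy
    simpa using c'.colorable.chromaticNumber_le

end SimpleGraph

theorem IndepNumIs.forall_adj_or_forall_adj {V : Type*} {G : SimpleGraph V}
    (hG : IndepNumIs G 2) {s : Set V} {w : V} (hw : w ∉ s)
    {C₁ C₂ : (G.induce s).ConnectedComponent} (hne : C₁ ≠ C₂) :
    (∀ a ∈ C₁.supp, G.Adj w a) ∨ (∀ a ∈ C₂.supp, G.Adj w a) := by
  classical
  by_contra! h
  obtain ⟨⟨a, ha, hwa⟩, ⟨b, hb, hwb⟩⟩ := h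
  have hab : ¬ G.Adj a b := SimpleGraph.ConnectedComponent.not_adj_of_ne hne ha hb
  have hne_ab : (a : V) ≠ b := fun h =>
    hne (SimpleGraph.ConnectedComponent.eq_of_common_vertex ha (Subtype.ext h ▸ hb))
  have hstable : (({w, (a : V), (b : V)} : Finset V) : Set V).Pairwise
      fun x y => ¬ G.Adj x y := by
    simp only [Finset.coe_insert, Finset.coe_singleton]
    refine Set.pairwise_insert.2
      ⟨Set.pairwise_pair.2 fun _ => ⟨hab, fun h => hab h.symm⟩, fun x hx _ => ?_⟩
    rcases hx with rfl | rfl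
    exacts [⟨hwa, fun h => hwa h.symm⟩, ⟨hwb, fun h => hwb h.symm⟩]
  have hcard : ({w, (a : V), (b : V)} : Finset V).card = 3 :=
    Finset.card_eq_three.2
      ⟨w, a, b, fun h => hw (h ▸ a.2), fun h => hw (h ▸ b.2), hne_ab, rfl⟩
  have := hG.2 ⟨_, hstable, hcard⟩
  omega

theorem stmt_14_general {V : Type*} (G : SimpleGraph V) (k : ℕ) (S : Finset V)
    (C₁ C₂ : (G.induce {v | v ∉ S}).ConnectedComponent)
    (hchrom : G.chromaticNumber = (k : ℕ∞))
    (hindep : IndepNumIs G 2)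
    (hstable : (S : Set V).Pairwise fun a b => ¬ G.Adj a b)
    (hne : C₁ ≠ C₂)
    (hall : ∀ C : (G.induce {v | v ∉ S}).ConnectedComponent, C = C₁ ∨ C = C₂) :
    (∀ w ∈ S,
      (∀ a : {v : V | v ∉ S}, a ∈ C₁.supp → G.Adj w a) ∨
      (∀ a : {v : V | v ∉ S}, a ∈ C₂.supp → G.Adj w a)) ∧
    ((k - 1 : ℕ) : ℕ∞) ≤
      max ((G.induce {v | v ∉ S}).induce C₁.supp).chromaticNumber
          ((G.induce {v | v ∉ S}).induce C₂.supp).chromaticNumber := by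
  refine ⟨fun w hw => hindep.forall_adj_or_forall_adj (not_not.2 hw) hne, ?_⟩
  have hk : (k : ℕ∞) ≤
      max C₁.toSimpleGraph.chromaticNumber C₂.toSimpleGraph.chromaticNumber + 1 :=
    hchrom ▸ (SimpleGraph.chromaticNumber_le_induce_compl_add_one hstable).trans
      (add_le_add_left (SimpleGraph.chromaticNumber_le_max_of_forall_eq_or_eq hall) 1)
  rw [ENat.natCast_sub, Nat.cast_one]
  exact tsub_le_iff_right.2 hk

/-- Let `G` be a connected graph with `α(G) = 2` and `χ(G) = k`, let `S` be a stable
cut-set of size `2`, and let `C₁`, `C₂` be the (exactly two) connected components of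
`G − S`. Then every vertex `w ∈ S` satisfies `V(C₁) ⊆ N(w)` or `V(C₂) ⊆ N(w)`, and
`max{χ(C₁), χ(C₂)} ≥ k − 1`. -/
theorem stmt_14 {V : Type*} [Fintype V] (G : SimpleGraph V) (k : ℕ) (S : Finset V)
    (C₁ C₂ : (G.induce {v | v ∉ S}).ConnectedComponent)
    (hconn : G.Connected) (hchrom : G.chromaticNumber = (k : ℕ∞))
    (hindep : IndepNumIs G 2)
    (hcard : S.card = 2)
    (hstable : (S : Set V).Pairwise fun a b => ¬ G.Adj a b)
    (hcut : ¬ (G.induce {v | v ∉ S}).Connected)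
    (hne : C₁ ≠ C₂)
    (hall : ∀ C : (G.induce {v | v ∉ S}).ConnectedComponent, C = C₁ ∨ C = C₂) :
    (∀ w ∈ S,
      (∀ a : {v : V | v ∉ S}, a ∈ C₁.supp → G.Adj w a) ∨
      (∀ a : {v : V | v ∉ S}, a ∈ C₂.supp → G.Adj w a)) ∧
    ((k - 1 : ℕ) : ℕ∞) ≤
      max ((G.induce {v | v ∉ S}).induce C₁.supp).chromaticNumber
          ((G.induce {v | v ∉ S}).induce C₂.supp).chromaticNumber :=
  stmt_14_general G k S C₁ C₂ hchrom hindep hstable hne hall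
end

section
/- For all integers k ≥ 5 and real x ≥ k: (x−1)_{k−1}·(x−2)_{k−3}·((x−1)^3 + 2(x−1)^2 − 1) < (x−1)_{k−1}·((x−1)^k − 1), hence is strictly less than (x−1)_{k−1}·((x−1)^k + (−1)^{k−1}). -/
/-!
Write `t = x - 1 ≥ k - 1`. The common factor `(t)_{k-1}` is positive, so it suffices that
`(t-1)_{k-3} (t³ + 2t² - 1) < t^k - 1`. Splitting off the first two factors,
`(t-1)_{k-3} = (t-1)(t-2)(t-3)_{k-5} ≤ (t-1)(t-2) t^{k-5}`, and
`(t-1)(t-2)(t³ + 2t² - 1) = t⁵ - (t⁴ + 4t³ - 3t² - 3t + 2)`, where the subtracted quartic exceeds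
`1` for `t > 1`.
-/

open Polynomial

theorem descPochhammer_eval_le_pow {S : Type*} [Ring S] [PartialOrder S] [IsStrictOrderedRing S]
    {n : ℕ} {s u : S} (h : (n : S) - 1 ≤ s) (hsu : s ≤ u) :
    (descPochhammer S n).eval s ≤ u ^ n := by
  induction n with
  | zero => simp
  | succ n ih =>
    rw [Nat.cast_add_one, add_sub_cancel_right] at h
    rw [descPochhammer_succ_eval, pow_succ]
    exact mul_le_mul (ih ((sub_le_self _ zero_le_one).trans h))
      ((sub_le_self s (Nat.cast_nonneg n)).trans hsu) (sub_nonneg.2 h)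
      (pow_nonneg ((Nat.cast_nonneg n).trans (h.trans hsu)) n)

theorem descPochhammer_eval_add_two {R : Type*} [CommRing R] (n : ℕ) (s : R) :
    (descPochhammer R (n + 2)).eval s = s * (s - 1) * (descPochhammer R n).eval (s - 2) := by
  rw [add_comm, ← descPochhammer_mul, eval_mul, eval_comp]
  simp [descPochhammer_succ_eval]

theorem pow_mul_quintic_lt_pow_sub_one {t : ℝ} (ht : 1 < t) (m : ℕ) :
    t ^ m * ((t - 1) * (t - 2) * (t ^ 3 + 2 * t ^ 2 - 1)) < t ^ (m + 5) - 1 := by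
  set g := t ^ 4 + 4 * t ^ 3 - 3 * t ^ 2 - 3 * t + 2
  have hg : 1 < g := by nlinarith [sq_nonneg t, mul_pos (sub_pos.2 ht) (sub_pos.2 ht)]
  have hpow : 1 ≤ t ^ m := one_le_pow₀ ht.le
  calc t ^ m * ((t - 1) * (t - 2) * (t ^ 3 + 2 * t ^ 2 - 1)) = t ^ (m + 5) - t ^ m * g := by
        rw [pow_add]; ring
    _ < t ^ (m + 5) - 1 := by nlinarith

theorem descPochhammer_eval_sub_one_mul_lt {k : ℕ} (hk : 5 ≤ k) {t : ℝ} (ht : (k : ℝ) - 1 ≤ t) :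
    (descPochhammer ℝ (k - 3)).eval (t - 1) * (t ^ 3 + 2 * t ^ 2 - 1) < t ^ k - 1 := by
  obtain ⟨m, rfl⟩ : ∃ m, k = m + 5 := ⟨k - 5, by omega⟩
  push_cast at ht
  have hD : (descPochhammer ℝ m).eval (t - 1 - 2) ≤ t ^ m :=
    descPochhammer_eval_le_pow (by linarith) (by linarith)
  have hc : 0 ≤ (t - 1 - 1) * (t ^ 3 + 2 * t ^ 2 - 1) :=
    mul_nonneg (by linarith) (by nlinarith)
  calc (descPochhammer ℝ (m + 5 - 3)).eval (t - 1) * (t ^ 3 + 2 * t ^ 2 - 1)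
      = (t - 1) * ((t - 1 - 1) * (t ^ 3 + 2 * t ^ 2 - 1)) *
          (descPochhammer ℝ m).eval (t - 1 - 2) := by
        rw [show m + 5 - 3 = m + 2 by omega, descPochhammer_eval_add_two]; ring
    _ ≤ (t - 1) * ((t - 1 - 1) * (t ^ 3 + 2 * t ^ 2 - 1)) * t ^ m :=
        mul_le_mul_of_nonneg_left hD (mul_nonneg (by linarith) hc)
    _ = t ^ m * ((t - 1) * (t - 2) * (t ^ 3 + 2 * t ^ 2 - 1)) := by ring
    _ < t ^ (m + 5) - 1 := pow_mul_quintic_lt_pow_sub_one (by linarith) m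

/-- For integers `k ≥ 5` and real `x ≥ k`:
`(x−1)_{k−1}·(x−2)_{k−3}·((x−1)³ + 2(x−1)² − 1) < (x−1)_{k−1}·((x−1)^k − 1)`,
hence it is strictly less than `(x−1)_{k−1}·((x−1)^k + (−1)^{k−1})`. -/
theorem stmt_17 (k : ℕ) (hk : 5 ≤ k) (x : ℝ) (hx : (k : ℝ) ≤ x) :
    (descPochhammer ℝ (k - 1)).eval (x - 1) * (descPochhammer ℝ (k - 3)).eval (x - 2) *
        ((x - 1) ^ 3 + 2 * (x - 1) ^ 2 - 1) <
      (descPochhammer ℝ (k - 1)).eval (x - 1) * ((x - 1) ^ k - 1) ∧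
    (descPochhammer ℝ (k - 1)).eval (x - 1) * (descPochhammer ℝ (k - 3)).eval (x - 2) *
        ((x - 1) ^ 3 + 2 * (x - 1) ^ 2 - 1) <
      (descPochhammer ℝ (k - 1)).eval (x - 1) * ((x - 1) ^ k + (-1 : ℝ) ^ (k - 1)) := by
  have hP : 0 < (descPochhammer ℝ (k - 1)).eval (x - 1) := by
    apply descPochhammer_pos
    rw [Nat.cast_sub (by omega)]
    push_cast
    linarith
  have hcore := descPochhammer_eval_sub_one_mul_lt hk (t := x - 1) (by linarith)
  rw [sub_sub, one_add_one_eq_two] at hcore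
  have hlt := mul_lt_mul_of_pos_left hcore hP
  rw [← mul_assoc] at hlt
  refine ⟨hlt, hlt.trans_le (mul_le_mul_of_nonneg_left ?_ hP.le)⟩
  rcases neg_one_pow_eq_or ℝ (k - 1) with h | h <;> rw [h] <;> linarith
end
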